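/- Let k ≥ 1 be an integer and w, w′ ∈ ℝ. Let f and h be smooth functions on the half-space {(t,x) : t > 0} ⊂ ℝ × ℝ^{n+1} satisfying Xf = w′·f and Xh = (w−2)·h pointwise. Then the function D_{k,w,w′}[f](Q·h) vanishes at every point of {t > 0} at which |x| = t (that is, on the null cone {Q = 0} ∩ {t > 0}). -/

import Mathlib

/-- The flat Fefferman–Graham ambient space `ℝ × ℝ^{n+1}` of the standard conformal
`n`-sphere, with coordinates `(t, x⁰, …, xⁿ)`. -/
abbrev Amb (n : ℕ) : Type := ℝ × (Fin (n+1) → ℝ)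

/-- The partial derivative `∂_t`. -/
noncomputable def ptD {n : ℕ} (f : Amb n → ℝ) (p : Amb n) : ℝ :=
  fderiv ℝ f p (1, 0)

/-- The partial derivative `∂_{xⁱ}`. -/
noncomputable def pxD {n : ℕ} (i : Fin (n+1)) (f : Amb n → ℝ) (p : Amb n) : ℝ :=
  fderiv ℝ f p (0, Pi.single i 1)

/-- The flat ambient Laplacian `Δ̃f = ∂_t²f − Σᵢ ∂_{xⁱ}²f` (convention `Δ ≥ 0` for the
metric `g̃ = −dt² + Σᵢ (dxⁱ)²`). -/
noncomputable def LapA {n : ℕ} (f : Amb n → ℝ) : Amb n → ℝ :=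
  fun p => ptD (fun q => ptD f q) p - ∑ i, pxD i (fun q => pxD i f q) p

/-- The Euler (dilation) operator `Xf = t∂_t f + Σᵢ xⁱ∂_{xⁱ} f`. -/
noncomputable def EulerA {n : ℕ} (f : Amb n → ℝ) (p : Amb n) : ℝ :=
  p.1 * ptD f p + ∑ i, p.2 i * pxD i f p

/-- The function `Q(t,x) = |x|² − t²`. -/
def QA {n : ℕ} (p : Amb n) : ℝ := (∑ i, (p.2 i)^2) - p.1^2

/-- The half-space `{(t,x) : t > 0}`. -/
def HS (n : ℕ) : Set (Amb n) := {p | 0 < p.1}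

/-- The ascending Pochhammer symbol `P_j(z) = z(z+1)⋯(z+j−1)`. -/
noncomputable def poch (z : ℝ) (j : ℕ) : ℝ := Polynomial.eval z (ascPochhammer ℝ j)

/-- The Case–Yan building block
`D_{m,w,w′}[f](u) = Σ_{a+b=m} C(m,a)·P_a((n−2m)/2+w)·P_b(−w−w′−(n−2m)/2)·Δ̃^a(f·Δ̃^b u)`. -/
noncomputable def CY {n : ℕ} (m : ℕ) (w w' : ℝ) (f u : Amb n → ℝ) : Amb n → ℝ :=
  fun p => ∑ ab ∈ Finset.HasAntidiagonal.antidiagonal m,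
    ((m.choose ab.1 : ℝ) * poch (((n:ℝ) - 2*(m:ℝ))/2 + w) ab.1
      * poch (-w - w' - ((n:ℝ) - 2*(m:ℝ))/2) ab.2)
    * LapA^[ab.1] (fun q => f q * LapA^[ab.2] u q) p

/-!
For `g` homogeneous of degree `d`, the commutator of `Δ̃` with multiplication by `Q` gives
`Δ̃(Qg) = QΔ̃g − 2(2d + n + 2)g`, and iterating, `Δ̃^a(Qg) = QΔ̃^a g − 2a(2d + n + 4 − 2a)Δ̃^{a−1}g`.
Applying this twice to the summand `Δ̃^a(f·Δ̃^b(Qh))` of `D_{k,w,w′}[f](Qh)` at a point where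
`Q = 0` leaves multiples of `Δ̃^{a−1}(f·Δ̃^b h)` and `Δ̃^a(f·Δ̃^{b−1}h)`. With the Case–Yan
coefficients the second term of the summand `(a, b)` cancels the first term of `(a + 1, b − 1)`,
so the sum telescopes to zero.
-/

open scoped ContDiff
open Finset

section DirDeriv

variable {E : Type*} [NormedAddCommGroup E] [NormedSpace ℝ E] {U : Set E} {f g : E → ℝ} {p : E}

noncomputable def dirDeriv (v : E) (f : E → ℝ) : E → ℝ := fun q => fderiv ℝ f q v

theorem ContDiffOn.dirDeriv_of_isOpen {m k : ℕ∞ω} (hf : ContDiffOn ℝ k f U) (hU : IsOpen U)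
    (hmk : m + 1 ≤ k) (v : E) : ContDiffOn ℝ m (dirDeriv v f) U :=
  (hf.fderiv_of_isOpen hU hmk).clm_apply contDiffOn_const

theorem ContDiffOn.differentiableAt_of_isOpen {k : ℕ∞ω} (hf : ContDiffOn ℝ k f U)
    (hU : IsOpen U) (hk : k ≠ 0) (hp : p ∈ U) : DifferentiableAt ℝ f p :=
  (hf.differentiableOn hk).differentiableAt (hU.mem_nhds hp)

theorem ContDiffOn.differentiableAt_dirDeriv (hf : ContDiffOn ℝ 2 f U) (hU : IsOpen U)
    (hp : p ∈ U) (v : E) : DifferentiableAt ℝ (dirDeriv v f) p :=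
  (hf.dirDeriv_of_isOpen hU (m := 1) (by norm_num) v).differentiableAt_of_isOpen hU one_ne_zero hp

theorem Set.EqOn.dirDeriv (hfg : Set.EqOn f g U) (hU : IsOpen U) (v : E) :
    Set.EqOn (dirDeriv v f) (dirDeriv v g) U := fun q hq => by
  simp only [_root_.dirDeriv, (Filter.eventuallyEq_of_mem (hU.mem_nhds hq) hfg).fderiv_eq]

theorem dirDeriv_add (hf : DifferentiableAt ℝ f p) (hg : DifferentiableAt ℝ g p) (v : E) :
    dirDeriv v (fun q => f q + g q) p = dirDeriv v f p + dirDeriv v g p := by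
  simp [dirDeriv, fderiv_fun_add hf hg]

theorem dirDeriv_sub (hf : DifferentiableAt ℝ f p) (hg : DifferentiableAt ℝ g p) (v : E) :
    dirDeriv v (fun q => f q - g q) p = dirDeriv v f p - dirDeriv v g p := by
  simp [dirDeriv, fderiv_fun_sub hf hg]

theorem dirDeriv_sum {ι : Type*} {s : Finset ι} {F : ι → E → ℝ}
    (hF : ∀ i ∈ s, DifferentiableAt ℝ (F i) p) (v : E) :
    dirDeriv v (fun q => ∑ i ∈ s, F i q) p = ∑ i ∈ s, dirDeriv v (F i) p := by
  simp [dirDeriv, fderiv_fun_sum hF]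

theorem dirDeriv_const_mul (hf : DifferentiableAt ℝ f p) (c : ℝ) (v : E) :
    dirDeriv v (fun q => c * f q) p = c * dirDeriv v f p := by
  simp [dirDeriv, fderiv_const_mul hf c]

theorem dirDeriv_mul (hf : DifferentiableAt ℝ f p) (hg : DifferentiableAt ℝ g p) (v : E) :
    dirDeriv v (fun q => f q * g q) p = f p * dirDeriv v g p + g p * dirDeriv v f p := by
  simp [dirDeriv, fderiv_fun_mul hf hg]

theorem dirDeriv_dirDeriv_add (hU : IsOpen U) (hf : ContDiffOn ℝ 2 f U)
    (hg : ContDiffOn ℝ 2 g U) (hp : p ∈ U) (v : E) :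
    dirDeriv v (dirDeriv v (fun q => f q + g q)) p
      = dirDeriv v (dirDeriv v f) p + dirDeriv v (dirDeriv v g) p := by
  have hfirst : Set.EqOn (dirDeriv v (fun q => f q + g q))
      (fun q => dirDeriv v f q + dirDeriv v g q) U := fun q hq =>
    dirDeriv_add (hf.differentiableAt_of_isOpen hU two_ne_zero hq)
      (hg.differentiableAt_of_isOpen hU two_ne_zero hq) v
  rw [hfirst.dirDeriv hU v hp, dirDeriv_add (hf.differentiableAt_dirDeriv hU hp v)
    (hg.differentiableAt_dirDeriv hU hp v)]

theorem dirDeriv_dirDeriv_const_mul (hU : IsOpen U) (hf : ContDiffOn ℝ 2 f U) (hp : p ∈ U)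
    (c : ℝ) (v : E) :
    dirDeriv v (dirDeriv v (fun q => c * f q)) p = c * dirDeriv v (dirDeriv v f) p := by
  have hfirst : Set.EqOn (dirDeriv v (fun q => c * f q)) (fun q => c * dirDeriv v f q) U :=
    fun q hq => dirDeriv_const_mul (hf.differentiableAt_of_isOpen hU two_ne_zero hq) c v
  rw [hfirst.dirDeriv hU v hp, dirDeriv_const_mul (hf.differentiableAt_dirDeriv hU hp v)]

theorem dirDeriv_dirDeriv_mul (hU : IsOpen U) (hf : ContDiffOn ℝ 2 f U)
    (hg : ContDiffOn ℝ 2 g U) (hp : p ∈ U) (v : E) :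
    dirDeriv v (dirDeriv v (fun q => f q * g q)) p
      = f p * dirDeriv v (dirDeriv v g) p + 2 * (dirDeriv v f p * dirDeriv v g p)
        + g p * dirDeriv v (dirDeriv v f) p := by
  have hf1 q (hq : q ∈ U) := hf.differentiableAt_of_isOpen hU two_ne_zero hq
  have hg1 q (hq : q ∈ U) := hg.differentiableAt_of_isOpen hU two_ne_zero hq
  have hf2 := hf.differentiableAt_dirDeriv hU hp v
  have hg2 := hg.differentiableAt_dirDeriv hU hp v
  have hfirst : Set.EqOn (dirDeriv v (fun q => f q * g q))
      (fun q => f q * dirDeriv v g q + g q * dirDeriv v f q) U :=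
    fun q hq => dirDeriv_mul (hf1 q hq) (hg1 q hq) v
  rw [hfirst.dirDeriv hU v hp, dirDeriv_add ((hf1 p hp).fun_mul hg2) ((hg1 p hp).fun_mul hf2),
    dirDeriv_mul (hf1 p hp) hg2, dirDeriv_mul (hg1 p hp) hf2]
  ring

theorem dirDeriv_fderiv_apply_self (hg : ContDiffAt ℝ 2 g p) (v : E) :
    dirDeriv v (fun q => fderiv ℝ g q q) p = dirDeriv v g p + fderiv ℝ (dirDeriv v g) p p := by
  have hd : DifferentiableAt ℝ (fderiv ℝ g) p := (hg.fderiv_right (m := 1) (by norm_num)).differentiableAt one_ne_zero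
  have hsymm := hg.isSymmSndFDerivAt (by simp)
  unfold dirDeriv
  rw [fderiv_clm_apply hd differentiableAt_fun_id, fderiv_clm_apply hd (differentiableAt_const v)]
  simp [hsymm.eq v p]

theorem dirDeriv_dirDeriv_fderiv_apply_self (hU : IsOpen U) (hg : ContDiffOn ℝ 3 g U)
    (hp : p ∈ U) (v : E) :
    dirDeriv v (dirDeriv v (fun q => fderiv ℝ g q q)) p
      = 2 * dirDeriv v (dirDeriv v g) p + fderiv ℝ (dirDeriv v (dirDeriv v g)) p p := by
  have hdg : ContDiffAt ℝ 2 (dirDeriv v g) p :=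
    (hg.dirDeriv_of_isOpen hU (m := 2) (by norm_num) v).contDiffAt (hU.mem_nhds hp)
  have hfirst : Set.EqOn (dirDeriv v (fun q => fderiv ℝ g q q))
      (fun q => dirDeriv v g q + fderiv ℝ (dirDeriv v g) q q) U := fun q hq =>
    dirDeriv_fderiv_apply_self ((hg.contDiffAt (hU.mem_nhds hq)).of_le (by norm_num)) v
  have hEdg : DifferentiableAt ℝ (fun q => fderiv ℝ (dirDeriv v g) q q) p :=
    ((hdg.fderiv_right (m := 1) (by norm_num)).differentiableAt one_ne_zero).clm_apply
      differentiableAt_id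
  rw [hfirst.dirDeriv hU v hp, dirDeriv_add (hdg.differentiableAt two_ne_zero) hEdg,
    dirDeriv_fderiv_apply_self hdg]
  ring

end DirDeriv

section Ambient

variable {n : ℕ} {U : Set (Amb n)} {f g : Amb n → ℝ} {p : Amb n}

theorem lapA_apply (f : Amb n → ℝ) (p : Amb n) :
    LapA f p = dirDeriv (1, 0) (dirDeriv (1, 0) f) p
      - ∑ i, dirDeriv (0, Pi.single i 1) (dirDeriv (0, Pi.single i 1) f) p := rfl

theorem eulerA_eq (f : Amb n → ℝ) : EulerA f = fun q => fderiv ℝ f q q := by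
  funext q
  have hq : q = q.1 • ((1, 0) : Amb n) + ∑ i, q.2 i • ((0, Pi.single i 1) : Amb n) := by
    ext j
    · simp [Prod.fst_sum]
    · simp [Prod.snd_sum, Finset.sum_apply, Pi.single_apply]
  conv_rhs => arg 2; rw [hq]
  simp only [EulerA, ptD, pxD, map_add, map_smul, map_sum, smul_eq_mul]

theorem Set.EqOn.lapA (hfg : Set.EqOn f g U) (hU : IsOpen U) :
    Set.EqOn (LapA f) (LapA g) U := fun q hq => by
  have h v := (hfg.dirDeriv hU v).dirDeriv hU v hq
  simp only [lapA_apply, h]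

theorem Set.EqOn.iterate_lapA (hfg : Set.EqOn f g U) (hU : IsOpen U) (a : ℕ) :
    Set.EqOn (LapA^[a] f) (LapA^[a] g) U := by
  induction a with
  | zero => exact hfg
  | succ a ih => simpa only [Function.iterate_succ_apply'] using ih.lapA hU

theorem ContDiffOn.lapA (hf : ContDiffOn ℝ ∞ f U) (hU : IsOpen U) :
    ContDiffOn ℝ ∞ (LapA f) U := by
  have hdd v : ContDiffOn ℝ ∞ (dirDeriv v (dirDeriv v f)) U :=
    (hf.dirDeriv_of_isOpen hU (m := ∞) (by simp) v).dirDeriv_of_isOpen hU (m := ∞) (by simp) v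
  exact (hdd _).sub (ContDiffOn.sum fun i _ => hdd _)

theorem ContDiffOn.iterate_lapA (hf : ContDiffOn ℝ ∞ f U) (hU : IsOpen U) (a : ℕ) :
    ContDiffOn ℝ ∞ (LapA^[a] f) U := by
  induction a with
  | zero => exact hf
  | succ a ih => rw [Function.iterate_succ_apply']; exact ih.lapA hU

theorem lapA_add (hU : IsOpen U) (hf : ContDiffOn ℝ 2 f U) (hg : ContDiffOn ℝ 2 g U)
    (hp : p ∈ U) : LapA (fun q => f q + g q) p = LapA f p + LapA g p := by
  simp only [lapA_apply, dirDeriv_dirDeriv_add hU hf hg hp, sum_add_distrib]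
  ring

theorem lapA_const_mul (hU : IsOpen U) (hf : ContDiffOn ℝ 2 f U) (hp : p ∈ U) (c : ℝ) :
    LapA (fun q => c * f q) p = c * LapA f p := by
  simp only [lapA_apply, dirDeriv_dirDeriv_const_mul hU hf hp, ← mul_sum]
  ring

theorem lapA_mul (hU : IsOpen U) (hf : ContDiffOn ℝ 2 f U) (hg : ContDiffOn ℝ 2 g U)
    (hp : p ∈ U) :
    LapA (fun q => f q * g q) p
      = f p * LapA g p + 2 * (ptD f p * ptD g p - ∑ i, pxD i f p * pxD i g p)
        + g p * LapA f p := by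
  simp only [lapA_apply, dirDeriv_dirDeriv_mul hU hf hg hp, sum_add_distrib, ← mul_sum]
  simp only [dirDeriv, ptD, pxD]
  ring

theorem lapA_eulerA (hU : IsOpen U) (hg : ContDiffOn ℝ 3 g U) (hp : p ∈ U) :
    LapA (EulerA g) p = EulerA (LapA g) p + 2 * LapA g p := by
  have hdd v : DifferentiableAt ℝ (dirDeriv v (dirDeriv v g)) p :=
    (hg.dirDeriv_of_isOpen hU (m := 2) (by norm_num) v).differentiableAt_dirDeriv hU hp v
  have hEuler : fderiv ℝ (LapA g) p p = fderiv ℝ (dirDeriv (1, 0) (dirDeriv (1, 0) g)) p p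
      - ∑ i, fderiv ℝ (dirDeriv (0, Pi.single i 1) (dirDeriv (0, Pi.single i 1) g)) p p :=
    (dirDeriv_sub (hdd _) (DifferentiableAt.fun_sum fun i _ => hdd _) p).trans
      (congrArg _ (dirDeriv_sum (fun i _ => hdd _) p))
  simp only [eulerA_eq]
  rw [hEuler]
  simp only [lapA_apply, dirDeriv_dirDeriv_fderiv_apply_self hU hg hp, sum_add_distrib, ← mul_sum]
  ring

theorem iterate_lapA_add (hU : IsOpen U) (hf : ContDiffOn ℝ ∞ f U) (hg : ContDiffOn ℝ ∞ g U)
    (a : ℕ) :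
    Set.EqOn (LapA^[a] (fun q => f q + g q)) (fun q => LapA^[a] f q + LapA^[a] g q) U := by
  induction a with
  | zero => exact fun _ _ => rfl
  | succ a ih =>
    intro q hq
    simp only [Function.iterate_succ_apply']
    rw [ih.lapA hU hq, lapA_add hU ((hf.iterate_lapA hU a).of_le (by norm_cast))
      ((hg.iterate_lapA hU a).of_le (by norm_cast)) hq]

theorem iterate_lapA_const_mul (hU : IsOpen U) (hf : ContDiffOn ℝ ∞ f U) (c : ℝ) (a : ℕ) :
    Set.EqOn (LapA^[a] (fun q => c * f q)) (fun q => c * LapA^[a] f q) U := by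
  induction a with
  | zero => exact fun _ _ => rfl
  | succ a ih =>
    intro q hq
    simp only [Function.iterate_succ_apply']
    rw [ih.lapA hU hq, lapA_const_mul hU ((hf.iterate_lapA hU a).of_le (by norm_cast)) hq]

end Ambient

section Homogeneous

variable {n : ℕ} {U : Set (Amb n)} {f g : Amb n → ℝ} {d e : ℝ}

def IsHomogeneousOn (U : Set (Amb n)) (d : ℝ) (f : Amb n → ℝ) : Prop :=
  ∀ p ∈ U, EulerA f p = d * f p

theorem IsHomogeneousOn.mul (hU : IsOpen U) (hfd : IsHomogeneousOn U d f)
    (hge : IsHomogeneousOn U e g) (hf : DifferentiableOn ℝ f U) (hg : DifferentiableOn ℝ g U) :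
    IsHomogeneousOn U (d + e) (fun q => f q * g q) := fun q hq => by
  have hE (φ : Amb n → ℝ) : EulerA φ q = dirDeriv q φ q := congrFun (eulerA_eq φ) q
  rw [hE, dirDeriv_mul (hf.differentiableAt (hU.mem_nhds hq))
    (hg.differentiableAt (hU.mem_nhds hq)), ← hE, ← hE, hfd q hq, hge q hq]
  ring

theorem IsHomogeneousOn.lapA (hU : IsOpen U) (hg : ContDiffOn ℝ 3 g U)
    (hd : IsHomogeneousOn U d g) : IsHomogeneousOn U (d - 2) (LapA g) := fun q hq => by
  have hEuler : LapA (EulerA g) q = d * LapA g q :=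
    (Set.EqOn.lapA (g := fun r => d * g r) hd hU hq).trans
      (lapA_const_mul hU (hg.of_le (by norm_num)) hq d)
  linarith [lapA_eulerA hU hg hq]

theorem IsHomogeneousOn.iterate_lapA (hU : IsOpen U) (hg : ContDiffOn ℝ ∞ g U)
    (hd : IsHomogeneousOn U d g) (a : ℕ) : IsHomogeneousOn U (d - 2 * a) (LapA^[a] g) := by
  induction a with
  | zero => simpa using hd
  | succ a ih =>
    rw [Function.iterate_succ_apply']
    convert ih.lapA hU ((hg.iterate_lapA hU a).of_le (by norm_cast)) using 1
    push_cast
    ring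

end Homogeneous

section NullCone

variable {n : ℕ} {U : Set (Amb n)} {f g h : Amb n → ℝ} {p : Amb n} {d e : ℝ}

theorem contDiff_QA {m : ℕ∞ω} : ContDiff ℝ m (QA (n := n)) := by
  unfold QA
  fun_prop

theorem fderiv_coord_apply (i : Fin (n + 1)) (q v : Amb n) :
    fderiv ℝ (fun r : Amb n => r.2 i) q v = v.2 i :=
  congrArg (· v) ((ContinuousLinearMap.proj i).comp (ContinuousLinearMap.snd ℝ ℝ _)).fderiv

theorem fderiv_QA_apply (q v : Amb n) :
    fderiv ℝ QA q v = 2 * (∑ i, q.2 i * v.2 i - q.1 * v.1) := by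
  have hsq i : fderiv ℝ (fun r : Amb n => r.2 i ^ 2) q v = 2 * q.2 i * v.2 i := by
    rw [fderiv_fun_pow 2 (by fun_prop)]
    simp [fderiv_coord_apply]
  unfold QA
  rw [fderiv_fun_sub (by fun_prop) (by fun_prop), fderiv_fun_sum (fun i _ => by fun_prop),
    fderiv_fun_pow 2 (by fun_prop)]
  simp only [Nat.add_one_sub_one, pow_one, nsmul_eq_mul, Nat.cast_ofNat, fderiv_fst, sub_apply,
    _root_.sum_apply, hsq, smul_apply, ContinuousLinearMap.coe_fst', smul_eq_mul]
  rw [mul_sub, mul_sum]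
  simp only [mul_assoc]

theorem ptD_QA : ptD (QA (n := n)) = fun q => -2 * q.1 := by
  funext q
  simp [ptD, fderiv_QA_apply]

theorem pxD_QA (i : Fin (n + 1)) : pxD i (QA (n := n)) = fun q => 2 * q.2 i := by
  funext q
  simp [pxD, fderiv_QA_apply, Pi.single_apply]

theorem lapA_QA (p : Amb n) : LapA QA p = -2 * (n + 2) := by
  have ht : ptD (fun q : Amb n => -2 * q.1) p = -2 := by
    simp only [ptD]
    rw [fderiv_const_mul (by fun_prop)]
    simp [fderiv_fst]
  have hx i : pxD i (fun q : Amb n => 2 * q.2 i) p = 2 := by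
    simp only [pxD]
    rw [fderiv_const_mul (by fun_prop)]
    simp [fderiv_coord_apply]
  simp only [LapA]
  simp only [ptD_QA, pxD_QA, ht, hx, sum_const, card_univ, Fintype.card_fin, nsmul_eq_mul]
  push_cast
  ring

theorem lapA_QA_mul (hU : IsOpen U) (hg : ContDiffOn ℝ 2 g U) (hp : p ∈ U) :
    LapA (fun q => QA q * g q) p
      = QA p * LapA g p - 4 * EulerA g p - 2 * (n + 2) * g p := by
  rw [lapA_mul hU contDiff_QA.contDiffOn hg hp, EulerA]
  simp only [ptD_QA, pxD_QA, lapA_QA, mul_assoc, ← mul_sum]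
  ring

noncomputable def lapQCoeff (n a : ℕ) (d : ℝ) : ℝ := -2 * a * (2 * d + n + 4 - 2 * a)

-- At `a = 0` the coefficient vanishes, so the truncated `a - 1` is harmless.
theorem iterate_lapA_QA_mul (hU : IsOpen U) (hg : ContDiffOn ℝ ∞ g U)
    (hd : IsHomogeneousOn U d g) (a : ℕ) :
    Set.EqOn (LapA^[a] (fun q => QA q * g q))
      (fun q => QA q * LapA^[a] g q + lapQCoeff n a d * LapA^[a - 1] g q) U := by
  have hsmooth (b : ℕ) : ContDiffOn ℝ 2 (LapA^[b] g) U :=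
    (hg.iterate_lapA hU b).of_le (by norm_cast)
  induction a with
  | zero => intro q _; simp [lapQCoeff]
  | succ a ih =>
    intro q hq
    have hprev : lapQCoeff n a d * LapA (LapA^[a - 1] g) q = lapQCoeff n a d * LapA^[a] g q := by
      rcases a with _ | a
      · simp [lapQCoeff]
      · rw [Nat.add_sub_cancel, ← Function.iterate_succ_apply' LapA]
    rw [Function.iterate_succ_apply', ih.lapA hU hq,
      lapA_add hU (contDiff_QA.contDiffOn.mul (hsmooth a)) (contDiffOn_const.mul (hsmooth _)) hq,
      lapA_QA_mul hU (hsmooth a) hq, lapA_const_mul hU (hsmooth _) hq,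
      hd.iterate_lapA hU hg a q hq, hprev, ← Function.iterate_succ_apply' LapA,
      Nat.add_sub_cancel]
    simp only [lapQCoeff]
    push_cast
    ring

theorem iterate_lapA_mul_iterate_lapA_QA_mul (hU : IsOpen U) (hf : ContDiffOn ℝ ∞ f U)
    (hh : ContDiffOn ℝ ∞ h U) (hfd : IsHomogeneousOn U d f) (hhe : IsHomogeneousOn U e h)
    (hp : p ∈ U) (hpQ : QA p = 0) (a b : ℕ) :
    LapA^[a] (fun q => f q * LapA^[b] (fun q => QA q * h q) q) p
      = lapQCoeff n a (d + (e - 2 * b)) * LapA^[a - 1] (fun q => f q * LapA^[b] h q) p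
        + lapQCoeff n b e * LapA^[a] (fun q => f q * LapA^[b - 1] h q) p := by
  have hF : ContDiffOn ℝ ∞ (fun q => f q * LapA^[b] h q) U := hf.mul (hh.iterate_lapA hU b)
  have hG : ContDiffOn ℝ ∞ (fun q => f q * LapA^[b - 1] h q) U :=
    hf.mul (hh.iterate_lapA hU (b - 1))
  have hFd : IsHomogeneousOn U (d + (e - 2 * b)) (fun q => f q * LapA^[b] h q) :=
    hfd.mul hU (hhe.iterate_lapA hU hh b) (hf.differentiableOn (by simp))
      ((hh.iterate_lapA hU b).differentiableOn (by simp))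
  have hsplit : Set.EqOn (fun q => f q * LapA^[b] (fun q => QA q * h q) q)
      (fun q => QA q * (f q * LapA^[b] h q) + lapQCoeff n b e * (f q * LapA^[b - 1] h q)) U := by
    intro q hq
    simp only [iterate_lapA_QA_mul hU hh hhe b hq]
    ring
  rw [hsplit.iterate_lapA hU a hp,
    iterate_lapA_add hU (contDiff_QA.contDiffOn.mul hF) (contDiffOn_const.mul hG) a hp]
  beta_reduce
  rw [iterate_lapA_QA_mul hU hF hFd a hp, iterate_lapA_const_mul hU hG _ a hp]
  beta_reduce
  rw [hpQ]
  ring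

end NullCone

theorem sum_range_add_eq_zero_of_telescope {M : Type*} [AddCommGroup M] {F G : ℕ → M} (k : ℕ)
    (hF : F 0 = 0) (hG : G k = 0) (hFG : ∀ a < k, F (a + 1) + G a = 0) :
    ∑ a ∈ range (k + 1), (F a + G a) = 0 := by
  rw [sum_add_distrib, sum_range_succ' F, sum_range_succ G, hF, hG, add_zero, add_zero,
    ← sum_add_distrib]
  exact sum_eq_zero fun a ha => hFG a (mem_range.1 ha)

theorem poch_succ (z : ℝ) (j : ℕ) : poch z (j + 1) = poch z j * (z + j) := by
  simp [poch, ascPochhammer_succ_right]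

noncomputable def cyCoeff (n m : ℕ) (w w' : ℝ) (a : ℕ) : ℝ :=
  m.choose a * poch (((n : ℝ) - 2 * (m : ℝ)) / 2 + w) a
    * poch (-w - w' - ((n : ℝ) - 2 * (m : ℝ)) / 2) (m - a)

theorem cy_eq_sum_range {n : ℕ} (m : ℕ) (w w' : ℝ) (f u : Amb n → ℝ) (p : Amb n) :
    CY m w w' f u p
      = ∑ a ∈ range (m + 1), cyCoeff n m w w' a * LapA^[a] (fun q => f q * LapA^[m - a] u q) p := by
  rw [CY, Finset.Nat.sum_antidiagonal_eq_sum_range_succ_mk]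
  rfl

-- With `α`, `β` the two Pochhammer arguments, the summands are `4 P_α(a) P_β(b) (α + a) (β + b)`
-- times `C(k, a + 1) (a + 1)` and `-C(k, a) (k - a)`, which cancel.
theorem cyCoeff_mul_lapQCoeff_add (n k a : ℕ) (w w' : ℝ) (ha : a < k) :
    cyCoeff n k w w' (a + 1) * lapQCoeff n (a + 1) (w' + ((w - 2) - 2 * ((k - (a + 1) : ℕ) : ℝ)))
      + cyCoeff n k w w' a * lapQCoeff n (k - a) (w - 2) = 0 := by
  obtain ⟨b, rfl⟩ : ∃ b, k = a + b + 1 := ⟨k - a - 1, by omega⟩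
  have hchoose : ((a + b + 1).choose (a + 1) : ℝ) * (a + 1) = (a + b + 1).choose a * (b + 1) := by
    have := Nat.choose_succ_right_eq (a + b + 1) a
    rw [show a + b + 1 - a = b + 1 by omega] at this
    exact_mod_cast this
  rw [cyCoeff, cyCoeff, show a + b + 1 - (a + 1) = b by omega, show a + b + 1 - a = b + 1 by omega,
    poch_succ, poch_succ]
  simp only [lapQCoeff]
  push_cast
  linear_combination 4 * poch (((n : ℝ) - 2 * (a + b + 1)) / 2 + w) a
    * poch (-w - w' - ((n : ℝ) - 2 * (a + b + 1)) / 2) b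
    * (((n : ℝ) - 2 * (a + b + 1)) / 2 + w + a) * (-w - w' - ((n : ℝ) - 2 * (a + b + 1)) / 2 + b)
    * hchoose

theorem stmt_6_general (n k : ℕ) (w w' : ℝ)
    (f h : Amb n → ℝ)
    (hf : ContDiffOn ℝ (⊤ : ℕ∞) f (HS n)) (hh : ContDiffOn ℝ (⊤ : ℕ∞) h (HS n))
    (hfhom : ∀ p ∈ HS n, EulerA f p = w' * f p)
    (hhhom : ∀ p ∈ HS n, EulerA h p = (w - 2) * h p)
    (p : Amb n) (hp : p ∈ HS n) (hpQ : QA p = 0) :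
    CY k w w' f (fun q => QA q * h q) p = 0 := by
  have hU : IsOpen (HS n) := isOpen_lt continuous_const continuous_fst
  rw [cy_eq_sum_range]
  simp only [iterate_lapA_mul_iterate_lapA_QA_mul hU hf hh hfhom hhhom hp hpQ, mul_add]
  refine sum_range_add_eq_zero_of_telescope k ?_ ?_ fun a ha => ?_
  · simp [lapQCoeff]
  · simp [lapQCoeff]
  · rw [Nat.add_sub_cancel, Nat.sub_sub]
    linear_combination LapA^[a] (fun q => f q * LapA^[k - (a + 1)] h q) p
      * cyCoeff_mul_lapQCoeff_add n k a w w' ha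

/-- Lemma 6.1, flat case; Case–Yan tangentiality: let `k ≥ 1`, and let
`f, h` be smooth on the half-space `{t > 0}` with `Xf = w′·f` and `Xh = (w−2)·h` there.
Then `D_{k,w,w′}[f](Q·h)` vanishes at every point of `{t > 0}` on the null cone `{Q = 0}`. -/
theorem stmt_6 (n k : ℕ) (hn : 1 ≤ n) (hk : 1 ≤ k) (w w' : ℝ)
    (f h : Amb n → ℝ)
    (hf : ContDiffOn ℝ (⊤ : ℕ∞) f (HS n)) (hh : ContDiffOn ℝ (⊤ : ℕ∞) h (HS n))
    (hfhom : ∀ p ∈ HS n, EulerA f p = w' * f p)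
    (hhhom : ∀ p ∈ HS n, EulerA h p = (w - 2) * h p)
    (p : Amb n) (hp : p ∈ HS n) (hpQ : QA p = 0) :
    CY k w w' f (fun q => QA q * h q) p = 0 :=
  stmt_6_general n k w w' f h hf hh hfhom hhhom p hp hpQ
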